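/- arXiv:2605.14591 — 3 statements merged into one kernel-verified Lean document; each statement's English description precedes it below -/
import Mathlib

section
/- If a randomized algorithm A is (ε,δ)-DP, then for any two adjacent datasets D ~ D′: E[ (1 − e^{ε − |PLRV_{D,D′}^A(A(D))|})_+ ] ≤ (1 + e^{−ε}) δ. -/
open MeasureTheory ProbabilityTheory

noncomputable section

/-- Add/remove adjacency on datasets (multisets of data points). -/
def AddRemoveAdj {𝒳 : Type*} (D D' : Multiset 𝒳) : Prop :=
  ∃ x, D' = x ::ₘ D ∨ D = x ::ₘ D'

/-- Replace adjacency on membership-bit vectors. -/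
def ReplaceAdj {m : ℕ} (s s' : Fin m → ℤ) : Prop :=
  ∃ i, (∀ j, j ≠ i → s j = s' j) ∧ s i ≠ s' i

/-- `(ε,δ)`-differential privacy of a family of output measures w.r.t. an adjacency
relation. -/
def ApproxDP {I Z : Type*} [MeasurableSpace Z] (M : I → Measure Z)
    (adj : I → I → Prop) (ε δ : ℝ) : Prop :=
  ∀ D D', adj D D' → ∀ E : Set Z, MeasurableSet E →
    M D E ≤ ENNReal.ofReal (Real.exp ε) * M D' E + ENNReal.ofReal δ

/-- Pure `ε`-DP. -/
def PureDP {I Z : Type*} [MeasurableSpace Z] (M : I → Measure Z)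
    (adj : I → I → Prop) (ε : ℝ) : Prop :=
  ApproxDP M adj ε 0

/-- The trade-off function `T_{P,Q}(α) = inf {E_Q[φ] : φ measurable into {0,1}, E_P[φ] ≤ α}`
(tests `φ` are indicators of measurable sets). -/
def tradeoff {Z : Type*} [MeasurableSpace Z] (P Q : Measure Z) (α : ℝ) : ℝ :=
  sInf {β : ℝ | ∃ E : Set Z, MeasurableSet E ∧ (P E).toReal ≤ α ∧ β = (Q E).toReal}

/-- `f`-differential privacy. -/
def FDP {I Z : Type*} [MeasurableSpace Z] (M : I → Measure Z)
    (adj : I → I → Prop) (f : ℝ → ℝ) : Prop :=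
  ∀ D D', adj D D' → ∀ α ∈ Set.Icc (0:ℝ) 1, f α ≤ tradeoff (M D) (M D') α

/-- The distribution-shift mechanism: coordinate `i` is drawn from `P1` if `s i = 1`
and from `P0` otherwise. -/
def MDS {𝒳 : Type*} [MeasurableSpace 𝒳] (P1 P0 : Measure 𝒳)
    [IsProbabilityMeasure P1] [IsProbabilityMeasure P0] {m : ℕ} (s : Fin m → ℤ) :
    Measure (Fin m → 𝒳) :=
  haveI : ∀ i : Fin m, SigmaFinite (if s i = 1 then P1 else P0) := fun i => by
    split <;> infer_instance
  Measure.pi (fun i => if s i = 1 then P1 else P0)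

/-- The training set `D ∪ {x_i : s_i = 1}`. -/
def trainOf {𝒳 : Type*} {m : ℕ} (D : Multiset 𝒳) (x : Fin m → 𝒳) (s : Fin m → ℤ) :
    Multiset 𝒳 :=
  D + (Finset.univ : Finset (Fin m)).val.filterMap
    (fun i => if s i = 1 then some (x i) else none)

/-- The total mechanism `M_Tot(s) = (M_DS(s), M_A(M_DS(s), s))`. -/
def MTot {𝒳 Θ : Type*} [MeasurableSpace 𝒳] [MeasurableSpace Θ]
    (P1 P0 : Measure 𝒳) [IsProbabilityMeasure P1] [IsProbabilityMeasure P0]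
    (A : Multiset 𝒳 → Measure Θ) (D : Multiset 𝒳) {m : ℕ} (s : Fin m → ℤ) :
    Measure ((Fin m → 𝒳) × Θ) :=
  (MDS P1 P0 s).bind (fun x => (A (trainOf D x s)).map (fun t => (x, t)))

/-- The privacy loss random variable
`PLRV_{D,D'}^A(θ) = log(dP_{A(D)}/dP_{A(D')}(θ))`. -/
def PLRV {𝒳 Θ : Type*} [MeasurableSpace Θ] (A : Multiset 𝒳 → Measure Θ)
    (D D' : Multiset 𝒳) (t : Θ) : ℝ :=
  Real.log (((A D).rnDeriv (A D')) t).toReal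

/-! Write `f = dP/dQ` for `P = A D`, `Q = A D'`. Since `e^{-|log f|} = min (f, 1/f)`, on the part
of `P` absolutely continuous w.r.t. `Q` the integrand times `f` is at most
`(f - e^ε)_+ + e^{-ε} (1 - e^ε f)_+`, and on the singular part it is at most `1`.
The singular mass plus `∫ (f - e^ε)_+ dQ` is the hockey-stick divergence
`sup_E P E - e^ε Q E ≤ δ`, and `∫ (1 - e^ε f)_+ dQ` is the reverse one `sup_E Q E - e^ε P E ≤ δ`. -/

open Real Set
open scoped ENNReal

lemma mul_max_zero_one_sub_exp_sub_abs_log_le (ε : ℝ) {x : ℝ} (hx : 0 ≤ x) :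
    x * max 0 (1 - exp (ε - |log x|))
      ≤ max 0 (x - exp ε) + exp (-ε) * max 0 (1 - exp ε * x) := by
  rcases hx.eq_or_lt with rfl | hx
  · simp only [zero_mul]
    positivity
  have h_left := le_max_left 0 (x - exp ε)
  have h_right := le_max_left 0 (1 - exp ε * x)
  rcases le_total 0 (log x) with hlog | hlog
  · have h : x * max 0 (1 - exp (ε - |log x|)) = max 0 (x - exp ε) := by
      rw [abs_of_nonneg hlog, exp_sub, exp_log hx, mul_max_of_nonneg _ _ hx.le, mul_zero]
      field_simp
    nlinarith [exp_pos (-ε)]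
  · rw [abs_of_nonpos hlog, sub_neg_eq_add, exp_add, exp_log hx]
    rcases le_total (exp ε * x) 1 with hle | hle
    · have hx_le : x ≤ exp (-ε) := by
        rw [exp_neg]; field_simp; linarith
      nlinarith
    · rw [max_eq_left (by linarith), mul_zero]
      linarith

lemma mul_ofReal_max_zero_one_sub_exp_sub_abs_log_toReal_le (ε : ℝ) {r : ℝ≥0∞}
    (hr : r ≠ ∞) :
    r * ENNReal.ofReal (max 0 (1 - exp (ε - |log r.toReal|)))
      ≤ (r - ENNReal.ofReal (exp ε))
        + ENNReal.ofReal (exp (-ε)) * (1 - ENNReal.ofReal (exp ε) * r) := by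
  have hx : 0 ≤ r.toReal := ENNReal.toReal_nonneg
  calc r * ENNReal.ofReal (max 0 (1 - exp (ε - |log r.toReal|)))
      = ENNReal.ofReal (r.toReal * max 0 (1 - exp (ε - |log r.toReal|))) := by
        rw [ENNReal.ofReal_mul hx, ENNReal.ofReal_toReal hr]
    _ ≤ ENNReal.ofReal (max 0 (r.toReal - exp ε)
          + exp (-ε) * max 0 (1 - exp ε * r.toReal)) :=
        ENNReal.ofReal_le_ofReal (mul_max_zero_one_sub_exp_sub_abs_log_le ε hx)
    _ = _ := by
        rw [ENNReal.ofReal_add (le_max_left _ _) (mul_nonneg (exp_pos _).le (le_max_left _ _)),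
          ENNReal.ofReal_mul (exp_pos _).le]
        simp only [ENNReal.ofReal_max, ENNReal.ofReal_zero, zero_max]
        rw [ENNReal.ofReal_sub _ (exp_pos ε).le, ENNReal.ofReal_sub _ (by positivity),
          ENNReal.ofReal_one, ENNReal.ofReal_mul (exp_pos ε).le, ENNReal.ofReal_toReal hr]

namespace MeasureTheory.Measure

variable {Θ : Type*} [MeasurableSpace Θ]

lemma measure_eq_singularPart_add_setLIntegral_rnDeriv (P Q : Measure Θ)
    [P.HaveLebesgueDecomposition Q] {E : Set Θ} (hE : MeasurableSet E) :
    P E = P.singularPart Q E + ∫⁻ t in E, P.rnDeriv Q t ∂Q := by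
  conv_lhs => rw [haveLebesgueDecomposition_add P Q]
  rw [add_apply, withDensity_apply _ hE]

variable {P Q : Measure Θ}

lemma singularPart_univ_add_lintegral_rnDeriv_sub_le [IsFiniteMeasure Q]
    [P.HaveLebesgueDecomposition Q] {c d : ℝ≥0∞} (hc : c ≠ ∞)
    (h : ∀ E, MeasurableSet E → P E ≤ c * Q E + d) :
    P.singularPart Q univ + ∫⁻ t, (P.rnDeriv Q t - c) ∂Q ≤ d := by
  set f := P.rnDeriv Q
  have hf : Measurable f := measurable_rnDeriv P Q
  have hPQ := mutuallySingular_singularPart P Q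
  set N := hPQ.nullSet
  set E := {t | c < f t}
  have hE : MeasurableSet E := measurableSet_lt measurable_const hf
  -- `E ∪ Nᶜ` carries all of the singular part and all of the excess of `f` over `c`.
  have hE' : MeasurableSet (E ∪ Nᶜ) := hE.union hPQ.measurableSet_nullSet.compl
  have h_excess : ∫⁻ t, (f t - c) ∂Q + c * Q E = ∫⁻ t in E, f t ∂Q := by
    rw [← setLIntegral_eq_of_support_subset (s := E)
        fun t ht => tsub_pos_iff_lt.1 (pos_iff_ne_zero.2 ht),
      ← setLIntegral_const, ← lintegral_add_right _ measurable_const]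
    exact setLIntegral_congr_fun hE fun t ht => tsub_add_cancel_of_le ht.le
  have h_sing : P.singularPart Q (E ∪ Nᶜ) = P.singularPart Q univ := by
    rw [← univ_inter (E ∪ Nᶜ), measure_inter_conull]
    exact measure_mono_null (by rw [compl_union, compl_compl]; exact inter_subset_right)
      hPQ.measure_nullSet
  have hP : P.singularPart Q univ + ∫⁻ t in E, f t ∂Q ≤ P (E ∪ Nᶜ) := by
    rw [measure_eq_singularPart_add_setLIntegral_rnDeriv P Q hE', h_sing]
    gcongr
    exact subset_union_left
  have hQ : Q (E ∪ Nᶜ) ≤ Q E :=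
    (measure_union_le E Nᶜ).trans (by rw [hPQ.measure_compl_nullSet, add_zero])
  rw [← ENNReal.add_le_add_iff_right (ENNReal.mul_ne_top hc (measure_ne_top Q E)), add_assoc,
    h_excess, add_comm d]
  calc P.singularPart Q univ + ∫⁻ t in E, f t ∂Q ≤ P (E ∪ Nᶜ) := hP
    _ ≤ c * Q (E ∪ Nᶜ) + d := h _ hE'
    _ ≤ c * Q E + d := by gcongr

lemma lintegral_one_sub_mul_rnDeriv_le [IsFiniteMeasure P] [P.HaveLebesgueDecomposition Q]
    {c d : ℝ≥0∞} (hc : c ≠ ∞) (h : ∀ E, MeasurableSet E → Q E ≤ c * P E + d) :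
    ∫⁻ t, (1 - c * P.rnDeriv Q t) ∂Q ≤ d := by
  set f := P.rnDeriv Q
  have hf : Measurable f := measurable_rnDeriv P Q
  have hPQ := mutuallySingular_singularPart P Q
  set N := hPQ.nullSet
  set F := {t | c * f t < 1} ∩ N
  have hF : MeasurableSet F :=
    (measurableSet_lt (hf.const_mul c) measurable_const).inter hPQ.measurableSet_nullSet
  have h_restrict : ∫⁻ t, (1 - c * f t) ∂Q = ∫⁻ t in F, (1 - c * f t) ∂Q := by
    rw [← setLIntegral_eq_of_support_subset (s := {t | c * f t < 1})
        fun t ht => tsub_pos_iff_lt.1 (pos_iff_ne_zero.2 ht)]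
    exact setLIntegral_congr
      (inter_ae_eq_left_of_ae_eq_univ (ae_eq_univ.2 hPQ.measure_compl_nullSet)).symm
  have h_deficit : ∫⁻ t in F, (1 - c * f t) ∂Q + c * ∫⁻ t in F, f t ∂Q = Q F := by
    rw [← lintegral_const_mul _ hf, ← lintegral_add_right _ (hf.const_mul c),
      ← setLIntegral_one]
    exact setLIntegral_congr_fun hF fun t ht => tsub_add_cancel_of_le ht.1.le
  have hP : P F = ∫⁻ t in F, f t ∂Q := by
    rw [measure_eq_singularPart_add_setLIntegral_rnDeriv P Q hF,
      measure_mono_null inter_subset_right hPQ.measure_nullSet, zero_add]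
  have h_ne_top : c * ∫⁻ t in F, f t ∂Q ≠ ∞ :=
    ENNReal.mul_ne_top hc (hP ▸ measure_ne_top P F)
  rw [h_restrict, ← ENNReal.add_le_add_iff_right h_ne_top, h_deficit, ← hP, add_comm d]
  exact h F hF

theorem integral_max_zero_one_sub_exp_sub_abs_log_rnDeriv_le [IsFiniteMeasure P]
    [IsFiniteMeasure Q] {ε δ : ℝ} (hδ : 0 ≤ δ)
    (hPQ : ∀ E, MeasurableSet E → P E ≤ ENNReal.ofReal (exp ε) * Q E + ENNReal.ofReal δ)
    (hQP : ∀ E, MeasurableSet E → Q E ≤ ENNReal.ofReal (exp ε) * P E + ENNReal.ofReal δ) :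
    ∫ t, max 0 (1 - exp (ε - |log (P.rnDeriv Q t).toReal|)) ∂P ≤ (1 + exp (-ε)) * δ := by
  set f := P.rnDeriv Q
  have hf : Measurable f := measurable_rnDeriv P Q
  set c := ENNReal.ofReal (exp ε)
  set g : Θ → ℝ := fun t => max 0 (1 - exp (ε - |log (f t).toReal|))
  have hg : Measurable g := by fun_prop
  have hg_le : ∀ t, ENNReal.ofReal (g t) ≤ 1 := fun t =>
    ENNReal.ofReal_le_one.2 (max_le zero_le_one (by linarith [exp_pos (ε - |log (f t).toReal|)]))
  have h_split : ∫⁻ t, f t * ENNReal.ofReal (g t) ∂Q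
      ≤ ∫⁻ t, (f t - c) ∂Q + ENNReal.ofReal (exp (-ε)) * ∫⁻ t, (1 - c * f t) ∂Q := by
    rw [← lintegral_const_mul _ (by fun_prop), ← lintegral_add_left (by fun_prop)]
    exact lintegral_mono_ae <| (rnDeriv_lt_top P Q).mono fun t ht =>
      mul_ofReal_max_zero_one_sub_exp_sub_abs_log_toReal_le ε ht.ne
  have h_lintegral : ∫⁻ t, ENNReal.ofReal (g t) ∂P
      ≤ ENNReal.ofReal δ + ENNReal.ofReal (exp (-ε)) * ENNReal.ofReal δ := calc
    ∫⁻ t, ENNReal.ofReal (g t) ∂P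
        = ∫⁻ t, ENNReal.ofReal (g t) ∂(P.singularPart Q)
          + ∫⁻ t, ENNReal.ofReal (g t) ∂(Q.withDensity f) := by
      rw [← lintegral_add_measure, ← haveLebesgueDecomposition_add]
    _ ≤ P.singularPart Q univ + ∫⁻ t, f t * ENNReal.ofReal (g t) ∂Q := by
      rw [lintegral_withDensity_eq_lintegral_mul _ hf hg.ennreal_ofReal]
      exact add_le_add ((lintegral_mono hg_le).trans_eq lintegral_one) le_rfl
    _ ≤ (P.singularPart Q univ + ∫⁻ t, (f t - c) ∂Q)
          + ENNReal.ofReal (exp (-ε)) * ∫⁻ t, (1 - c * f t) ∂Q := by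
      rw [add_assoc]
      gcongr
    _ ≤ ENNReal.ofReal δ + ENNReal.ofReal (exp (-ε)) * ENNReal.ofReal δ := by
      gcongr
      · exact singularPart_univ_add_lintegral_rnDeriv_sub_le ENNReal.ofReal_ne_top hPQ
      · exact lintegral_one_sub_mul_rnDeriv_le ENNReal.ofReal_ne_top hQP
  rw [integral_eq_lintegral_of_nonneg_ae (ae_of_all _ fun t => (le_max_left _ _ : 0 ≤ g t))
    hg.aestronglyMeasurable]
  refine ENNReal.toReal_le_of_le_ofReal (by positivity) (h_lintegral.trans_eq ?_)
  rw [← ENNReal.ofReal_mul (exp_pos _).le, ← ENNReal.ofReal_add hδ (by positivity)]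
  ring_nf

end MeasureTheory.Measure

lemma AddRemoveAdj.symm {𝒳 : Type*} {D D' : Multiset 𝒳} (h : AddRemoveAdj D D') :
    AddRemoveAdj D' D := by
  obtain ⟨x, hx⟩ := h
  exact ⟨x, hx.symm⟩

theorem plrv_two_sided_hockey_stick_general
    {𝒳 Θ : Type*} [MeasurableSpace Θ]
    (A : Multiset 𝒳 → Measure Θ) (hA : ∀ d, IsProbabilityMeasure (A d))
    (ε δ : ℝ) (hδ : 0 ≤ δ)
    (hDP : ApproxDP A AddRemoveAdj ε δ)
    (D D' : Multiset 𝒳) (hadj : AddRemoveAdj D D') :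
    (∫ t, max 0 (1 - Real.exp (ε - |PLRV A D D' t|)) ∂(A D)) ≤ (1 + Real.exp (-ε)) * δ := by
  have := hA D
  have := hA D'
  exact Measure.integral_max_zero_one_sub_exp_sub_abs_log_rnDeriv_le hδ
    (hDP D D' hadj) (hDP D' D hadj.symm)

/-- **Proposition (Hockey-stick control of the two-sided PLRV tail).** If `A` is
`(ε,δ)`-DP, then for any two adjacent datasets `D ~ D'`:
`E[(1 − e^{ε − |PLRV_{D,D'}^A(A(D))|})_+] ≤ (1 + e^{−ε}) δ`. -/
theorem plrv_two_sided_hockey_stick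
    {𝒳 Θ : Type*} [MeasurableSpace Θ]
    (A : Multiset 𝒳 → Measure Θ) (hA : ∀ d, IsProbabilityMeasure (A d))
    (ε δ : ℝ) (hε : 0 < ε) (hδ : 0 ≤ δ)
    (hDP : ApproxDP A AddRemoveAdj ε δ)
    (D D' : Multiset 𝒳) (hadj : AddRemoveAdj D D') :
    (∫ t, max 0 (1 - Real.exp (ε - |PLRV A D D' t|)) ∂(A D)) ≤ (1 + Real.exp (-ε)) * δ :=
  plrv_two_sided_hockey_stick_general A hA ε δ hδ hDP D D' hadj
end
end

section
/- For a trade-off function f (decreasing, convex, f(t) ≤ 1−t on [0,1]), the function f′ defined by f′(t) = sup{ α : α + f(t − α) ≤ 1 } is increasing and concave. -/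
noncomputable section

/-- `f′(t) = sup{α : t − α ∈ [0,1] and α + f(t − α) ≤ 1}`. -/
def fprime (f : ℝ → ℝ) (t : ℝ) : ℝ :=
  sSup {α : ℝ | t - α ∈ Set.Icc (0:ℝ) 1 ∧ α + f (t - α) ≤ 1}

/-- **Lemma.** For a trade-off function `f` (decreasing, convex, `f(t) ≤ 1 − t` on
`[0,1]`), the function `f′(t) = sup{α : α + f(t − α) ≤ 1}` is increasing and concave. -/
theorem fprime_monotone_concave
    (f : ℝ → ℝ) (hfanti : AntitoneOn f (Set.Icc 0 1))
    (hfconv : ConvexOn ℝ (Set.Icc 0 1) f)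
    (hfle : ∀ t ∈ Set.Icc (0:ℝ) 1, f t ≤ 1 - t) :
    MonotoneOn (fprime f) (Set.Icc 0 1) ∧ ConcaveOn ℝ (Set.Icc 0 1) (fprime f) := by
  set S : ℝ → Set ℝ := fun t => {α : ℝ | t - α ∈ Set.Icc (0:ℝ) 1 ∧ α + f (t - α) ≤ 1}
    with hS
  have hfp : ∀ t, fprime f t = sSup (S t) := fun t => rfl
  have hf1 : f 1 ≤ 0 := by have := hfle 1 ⟨zero_le_one, le_refl 1⟩; linarith
  have hne : ∀ t ∈ Set.Icc (0:ℝ) 1, (S t).Nonempty := by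
    intro t ht
    refine ⟨0, ?_, ?_⟩
    · simpa using ht
    · have := hfle t ht
      have h1 : t - 0 = t := by ring
      rw [h1]
      linarith [ht.1]
  have hbdd : ∀ t, BddAbove (S t) := by
    intro t
    refine ⟨t, fun α hα => ?_⟩
    have := hα.1.1
    linarith
  have hcross : ∀ x ∈ Set.Icc (0:ℝ) 1, ∀ y ∈ Set.Icc (0:ℝ) 1, ∀ a b : ℝ,
      0 ≤ a → 0 ≤ b → a + b = 1 → ∀ α₁ ∈ S x, ∀ α₂ ∈ S y,
      a * α₁ + b * α₂ ∈ S (a * x + b * y) := by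
    intro x hx y hy a b ha hb hab α₁ hα₁ α₂ hα₂
    have h1 := hα₁.1
    have h2 := hα₂.1
    have hkey : a * x + b * y - (a * α₁ + b * α₂) = a * (x - α₁) + b * (y - α₂) := by ring
    constructor
    · rw [Set.mem_setOf_eq] at *
      rw [hkey]
      have := (convex_Icc (0:ℝ) 1) h1 h2 ha hb hab
      simpa [smul_eq_mul] using this
    · have hc := hfconv.2 h1 h2 ha hb hab
      simp only [smul_eq_mul] at hc
      rw [Set.mem_setOf_eq] at hα₁ hα₂
      rw [hkey]
      nlinarith [mul_le_mul_of_nonneg_left hα₁.2 ha, mul_le_mul_of_nonneg_left hα₂.2 hb]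
  constructor
  · -- Monotone
    intro x hx y hy hxy
    rw [hfp, hfp]
    apply csSup_le (hne x hx)
    intro α hα
    obtain ⟨⟨hα0, hα1⟩, hαf⟩ := hα
    by_cases h : y - α ≤ 1
    · apply le_csSup (hbdd y)
      refine ⟨⟨by linarith, h⟩, ?_⟩
      have hmono : f (y - α) ≤ f (x - α) :=
        hfanti ⟨by linarith, by linarith⟩ ⟨by linarith, h⟩ (by linarith)
      linarith
    · have h1 : α ≤ y - 1 := by linarith
      have h2 : y - 1 ∈ S y := by
        refine ⟨⟨by norm_num, by norm_num⟩, ?_⟩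
        have hy1 : y - (y - 1) = 1 := by ring
        rw [hy1]
        linarith [hy.2]
      exact h1.trans (le_csSup (hbdd y) h2)
  · -- Concave
    refine ⟨convex_Icc 0 1, ?_⟩
    intro x hx y hy a b ha hb hab
    simp only [smul_eq_mul, hfp]
    rcases eq_or_lt_of_le ha with h0 | ha'
    · have hb1 : b = 1 := by linarith
      simp [← h0, hb1]
    rcases eq_or_lt_of_le hb with h0 | hb'
    · have ha1 : a = 1 := by linarith
      simp [← h0, ha1]
    have key : ∀ α₁ ∈ S x, ∀ α₂ ∈ S y,
        a * α₁ + b * α₂ ≤ sSup (S (a * x + b * y)) := fun α₁ h₁ α₂ h₂ =>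
      le_csSup (hbdd _) (hcross x hx y hy a b ha hb hab α₁ h₁ α₂ h₂)
    have step1 : ∀ α₁ ∈ S x, a * α₁ + b * sSup (S y) ≤ sSup (S (a * x + b * y)) := by
      intro α₁ h₁
      have hsy : sSup (S y) ≤ (sSup (S (a * x + b * y)) - a * α₁) / b := by
        apply csSup_le (hne y hy)
        intro α₂ h₂
        rw [le_div_iff₀ hb']
        have := key α₁ h₁ α₂ h₂
        nlinarith
      have := (le_div_iff₀ hb').mp hsy
      nlinarith
    have hsx : sSup (S x) ≤ (sSup (S (a * x + b * y)) - b * sSup (S y)) / a := by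
      apply csSup_le (hne x hx)
      intro α₁ h₁
      rw [le_div_iff₀ ha']
      have := step1 α₁ h₁
      nlinarith
    have := (le_div_iff₀ ha').mp hsx
    nlinarith
end
end

section
/- For any two bit vectors S, S′ ∈ {−1,1}^m that are adjacent at coordinate i (they agree except at index i), and any x ∈ X^m in the support: | log( dP_{M_DS(S)}(x) / dP_{M_DS(S′)}(x) ) | = ε_DS(x_i), where ε_DS(x) = |log π(x) − log(1 − π(x))| and π is the propensity score induced by the prior that members follow P_1 and non-members follow P_0. -/
open MeasureTheory

noncomputable section

/-- The density of the distribution-shift mechanism `M_DS(s)` with respect to the product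
base measure, when `P1` and `P0` have densities `p1` and `p0`: coordinate `i` contributes
`p1(x_i)` if `s_i = 1` and `p0(x_i)` otherwise. -/
def MDSdensity {𝒳 : Type*} {m : ℕ} (p1 p0 : 𝒳 → ℝ) (s : Fin m → ℤ) (x : Fin m → 𝒳) : ℝ :=
  ∏ i, (if s i = 1 then p1 (x i) else p0 (x i))

/-
Changing one bit `s_i` changes only the `i`-th factor of the product density, so the
likelihood ratio collapses to `p1(x_i)/p0(x_i)` or its inverse. On the other hand the log-odds
of the propensity score `p1/(p1+p0)` is `log p1 - log p0`, since the normaliser `p1 + p0`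
cancels.
-/

theorem Finset.prod_div_prod_eq_div_of_eq_off {ι K : Type*} [Fintype ι] [DecidableEq ι]
    [CommGroupWithZero K] {f g : ι → K} (i : ι) (hfg : ∀ j, j ≠ i → f j = g j)
    (hg : ∏ j, g j ≠ 0) : (∏ j, f j) / ∏ j, g j = f i / g i := by
  have hrest : ∏ j ∈ univ.erase i, f j = ∏ j ∈ univ.erase i, g j :=
    prod_congr rfl fun j hj => hfg j (ne_of_mem_erase hj)
  rw [← mul_prod_erase _ g (mem_univ i)] at hg ⊢
  rw [← mul_prod_erase _ f (mem_univ i), hrest, mul_div_mul_right _ _ (right_ne_zero_of_mul hg)]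

theorem Finset.pos_of_prod_pos_of_nonneg {ι R : Type*} [Fintype ι] [CommMonoidWithZero R]
    [NoZeroDivisors R] [PartialOrder R] [Nontrivial R] {f : ι → R} (hf : ∀ j, 0 ≤ f j)
    (hprod : 0 < ∏ j, f j) (i : ι) : 0 < f i :=
  (hf i).lt_of_ne' (prod_ne_zero_iff.mp hprod.ne' i (mem_univ i))

theorem Real.log_div_add_sub_log_one_sub_div_add {a b : ℝ} (ha : 0 < a) (hb : 0 < b) :
    log (a / (a + b)) - log (1 - a / (a + b)) = log a - log b := by
  have hab : a + b ≠ 0 := by positivity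
  have hcompl : 1 - a / (a + b) = b / (a + b) := by field_simp; ring
  rw [hcompl, Real.log_div ha.ne' hab, Real.log_div hb.ne' hab]
  ring

theorem MDS_pointwise_PLRV_general
    {𝒳 : Type*}
    (p1 p0 : 𝒳 → ℝ)
    (hp1nn : ∀ x, 0 ≤ p1 x) (hp0nn : ∀ x, 0 ≤ p0 x)
    -- the propensity score `π(x) = P(S = 1 | X = x) = p1(x)/(p1(x) + p0(x))`
    (pS : 𝒳 → ℝ) (hπ : ∀ x, pS x = p1 x / (p1 x + p0 x))
    (m : ℕ) (s s' : Fin m → ℤ)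
    (hs : ∀ j, s j = 1 ∨ s j = -1) (hs' : ∀ j, s' j = 1 ∨ s' j = -1)
    -- `s` and `s'` are adjacent at coordinate `i`: they agree except at index `i`
    (i : Fin m) (hagree : ∀ j, j ≠ i → s j = s' j) (hdiff : s i ≠ s' i)
    -- `x` is in the support of both `M_DS(s)` and `M_DS(s')`
    (x : Fin m → 𝒳)
    (hsupp : 0 < MDSdensity p1 p0 s x ∧ 0 < MDSdensity p1 p0 s' x) :
    |Real.log (MDSdensity p1 p0 s x / MDSdensity p1 p0 s' x)|
      = |Real.log (pS (x i)) - Real.log (1 - pS (x i))| := by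
  obtain ⟨hpos, hpos'⟩ := hsupp
  have hnn : ∀ (t : Fin m → ℤ) j, 0 ≤ if t j = 1 then p1 (x j) else p0 (x j) := by
    intro t j
    split_ifs
    exacts [hp1nn _, hp0nn _]
  have hfac := Finset.pos_of_prod_pos_of_nonneg (hnn s) hpos i
  have hfac' := Finset.pos_of_prod_pos_of_nonneg (hnn s') hpos' i
  unfold MDSdensity
  rw [Finset.prod_div_prod_eq_div_of_eq_off i (fun j hj => by rw [hagree j hj]) hpos'.ne', hπ]
  have hflip : (s i = 1 ∧ s' i = -1) ∨ (s i = -1 ∧ s' i = 1) := by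
    rcases hs i with h | h <;> rcases hs' i with h' | h' <;> omega
  rcases hflip with ⟨h, h'⟩ | ⟨h, h'⟩ <;> norm_num [h, h'] at hfac hfac' ⊢
  · rw [Real.log_div_add_sub_log_one_sub_div_add hfac hfac', Real.log_div hfac.ne' hfac'.ne']
  · rw [Real.log_div_add_sub_log_one_sub_div_add hfac' hfac, Real.log_div hfac.ne' hfac'.ne',
      abs_sub_comm]

/-- **Proposition (pointwise PLRV of the distribution-shift mechanism).** For any two bit
vectors `S, S' ∈ {−1,1}^m` adjacent at coordinate `i` (they agree except at index `i`)
and any `x` in the support: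
`|log(dP_{M_DS(S)}(x)/dP_{M_DS(S')}(x))| = ε_DS(x_i)`, where
`ε_DS(x) = |log π(x) − log(1−π(x))|` and `π = p1/(p1+p0)` is the propensity score induced
by the prior that members follow `P1` and non-members follow `P0` (each with prior `1/2`),
`p1, p0` being the densities of `P1, P0` with respect to a common base measure `base`. -/
theorem MDS_pointwise_PLRV
    {𝒳 : Type*} [MeasurableSpace 𝒳] (base : Measure 𝒳)
    (P1 P0 : Measure 𝒳) [IsProbabilityMeasure P1] [IsProbabilityMeasure P0]
    (p1 p0 : 𝒳 → ℝ) (hp1meas : Measurable p1) (hp0meas : Measurable p0)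
    (hp1nn : ∀ x, 0 ≤ p1 x) (hp0nn : ∀ x, 0 ≤ p0 x)
    (hP1 : P1 = base.withDensity (fun x => ENNReal.ofReal (p1 x)))
    (hP0 : P0 = base.withDensity (fun x => ENNReal.ofReal (p0 x)))
    -- the propensity score `π(x) = P(S = 1 | X = x) = p1(x)/(p1(x) + p0(x))`
    (pS : 𝒳 → ℝ) (hπ : ∀ x, pS x = p1 x / (p1 x + p0 x))
    (m : ℕ) (s s' : Fin m → ℤ)
    (hs : ∀ j, s j = 1 ∨ s j = -1) (hs' : ∀ j, s' j = 1 ∨ s' j = -1)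
    -- `s` and `s'` are adjacent at coordinate `i`: they agree except at index `i`
    (i : Fin m) (hagree : ∀ j, j ≠ i → s j = s' j) (hdiff : s i ≠ s' i)
    -- `x` is in the support of both `M_DS(s)` and `M_DS(s')`
    (x : Fin m → 𝒳)
    (hsupp : 0 < MDSdensity p1 p0 s x ∧ 0 < MDSdensity p1 p0 s' x) :
    |Real.log (MDSdensity p1 p0 s x / MDSdensity p1 p0 s' x)|
      = |Real.log (pS (x i)) - Real.log (1 - pS (x i))| :=
  MDS_pointwise_PLRV_general p1 p0 hp1nn hp0nn pS hπ m s s' hs hs' i hagree hdiff x hsupp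
end
end
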